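/- Fix constants T ≥ 1, τ > 0, μ > 0, and ε ∈ (0, 1/2), and let M = ⌈T·log₂ N⌉ and d = 2·Q⁻¹(ε)/μ with 2τ/d = Θ(1). Then there exist C > 0 and N₀ such that for all N ≥ N₀: any N points in the ball of radius τ in ℝ^M that are pairwise at Euclidean distance at least d have total l₀ cost (sum of support sizes) at least C·N·log₂ N. -/

import Mathlib

/-!
Points of `P` supported in a fixed set `S` of coordinates form a `d`-separated subset of the
`τ`-ball of an `#S`-dimensional space, so by volume packing there are at most `κ ^ #S` of them,
`κ = (2τ + d) / d`. Summing over supports gives the generating-function bound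
`∑ x ∈ P, ρ ^ ‖x‖₀ ≤ (1 + κρ) ^ M`, and Jensen's inequality for `exp` turns it into
`a · ∑ ‖x‖₀ ≥ N (log N - κ e⁻ᵃ M)` for every `a`. With `M ≈ T log₂ N` and `e^a = 8κT`
the right-hand side is of order `N log₂ N`.
-/

open MeasureTheory Metric Finset Module Real

noncomputable def gaussQ (a : ℝ) : ℝ :=
  ∫ b in Set.Ioi a, Real.exp (-b ^ 2 / 2) / Real.sqrt (2 * Real.pi)

lemma integrable_gaussQ_integrand :
    Integrable fun b : ℝ => exp (-b ^ 2 / 2) / √(2 * π) := by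
  simp_rw [neg_div, div_eq_inv_mul (_ ^ 2), ← neg_mul]
  exact (integrable_exp_neg_mul_sq (by norm_num)).div_const _

lemma gaussQ_zero : gaussQ 0 = 1 / 2 := by
  simp_rw [gaussQ, integral_div, neg_div, div_eq_inv_mul (_ ^ 2), ← neg_mul,
    integral_gaussian_Ioi, div_inv_eq_mul]
  field_simp

lemma gaussQ_antitone : Antitone gaussQ := fun _ _ hab =>
  setIntegral_mono_set integrable_gaussQ_integrand.integrableOn
    (Filter.Eventually.of_forall fun _ => by positivity)
    (Filter.Eventually.of_forall fun _ hx => hab.trans_lt hx)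

lemma pos_of_gaussQ_lt_half {q : ℝ} (h : gaussQ q < 1 / 2) : 0 < q := by
  by_contra! hq
  linarith [gaussQ_antitone hq, gaussQ_zero]

theorem card_le_of_separated_of_norm_le {E : Type*} [NormedAddCommGroup E] [NormedSpace ℝ E]
    [FiniteDimensional ℝ E] [MeasurableSpace E] [BorelSpace E] {P : Finset E} {R d : ℝ}
    (hR : 0 ≤ R) (hd : 0 < d) (hP : ∀ x ∈ P, ‖x‖ ≤ R)
    (hsep : ∀ x ∈ P, ∀ y ∈ P, x ≠ y → d ≤ dist x y) :
    (#P : ℝ) ≤ ((2 * R + d) / d) ^ finrank ℝ E := by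
  set μ : Measure E := Measure.addHaar
  have hd2 : 0 < d / 2 := half_pos hd
  have hdisj : (P : Set E).PairwiseDisjoint (ball · (d / 2)) := fun x hx y hy hxy =>
    ball_disjoint_ball (by linarith [hsep x hx y hy hxy])
  have hsub : ⋃ x ∈ P, ball x (d / 2) ⊆ ball 0 (R + d / 2) := by
    simp only [Set.iUnion_subset_iff]
    exact fun x hx => ball_subset_ball' (by simpa using (by linarith [hP x hx]))
  have hvol : (#P : ENNReal) * μ (ball 0 (d / 2)) ≤ μ (ball 0 (R + d / 2)) := calc
    (#P : ENNReal) * μ (ball 0 (d / 2)) = ∑ x ∈ P, μ (ball x (d / 2)) := by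
      simp [Measure.addHaar_ball_center]
    _ = μ (⋃ x ∈ P, ball x (d / 2)) :=
      (measure_biUnion_finset hdisj fun _ _ => measurableSet_ball).symm
    _ ≤ _ := measure_mono hsub
  rw [Measure.addHaar_ball_of_pos μ _ hd2,
    Measure.addHaar_ball_of_pos μ _ (by linarith : 0 < R + d / 2),
    ← mul_assoc, ENNReal.mul_le_mul_iff_left (measure_ball_pos μ _ one_pos).ne'
      measure_ball_lt_top.ne, ← ENNReal.ofReal_natCast, ← ENNReal.ofReal_mul (by positivity),
    ENNReal.ofReal_le_ofReal_iff (by positivity), ← le_div_iff₀ (by positivity),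
    ← div_pow] at hvol
  refine hvol.trans_eq (congrArg (· ^ _) ?_)
  rw [div_div_eq_mul_div]
  ring

lemma card_mul_exp_mean_le_sum_exp {α : Type*} (s : Finset α) (f : α → ℝ) :
    #s * exp ((∑ x ∈ s, f x) / #s) ≤ ∑ x ∈ s, exp (f x) := by
  rcases s.eq_empty_or_nonempty with rfl | hs
  · simp
  have hn : (0 : ℝ) < #s := by exact_mod_cast hs.card_pos
  have hjensen := convexOn_exp.map_sum_le (t := s) (w := fun _ => (#s : ℝ)⁻¹) (p := f)
    (fun _ _ => by positivity) (by simp [hn.ne']) (fun _ _ => Set.mem_univ _)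
  simp only [smul_eq_mul, ← mul_sum] at hjensen
  rw [div_eq_inv_mul]
  calc (#s : ℝ) * exp ((#s : ℝ)⁻¹ * ∑ x ∈ s, f x)
      ≤ #s * ((#s : ℝ)⁻¹ * ∑ x ∈ s, exp (f x)) := by gcongr
    _ = ∑ x ∈ s, exp (f x) := by field_simp

section Support

variable {ι : Type*} [Fintype ι]

noncomputable def l0Support (x : EuclideanSpace ℝ ι) : Finset ι :=
  Finset.univ.filter (fun i => x i ≠ 0)

lemma mem_span_basisFun_image_iff {x : EuclideanSpace ℝ ι} {S : Finset ι} :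
    x ∈ Submodule.span ℝ (S.image (PiLp.basisFun 2 ℝ ι) : Set (EuclideanSpace ℝ ι)) ↔
      l0Support x ⊆ S := by
  rw [coe_image, Basis.mem_span_image]
  simp [l0Support, Finset.subset_iff, Finsupp.mem_support_iff, PiLp.basisFun_repr]

variable [DecidableEq ι] {P : Finset (EuclideanSpace ℝ ι)} {R d : ℝ}

lemma card_filter_l0Support_subset_le (hR : 0 ≤ R) (hd : 0 < d) (hP : ∀ x ∈ P, ‖x‖ ≤ R)
    (hsep : ∀ x ∈ P, ∀ y ∈ P, x ≠ y → d ≤ dist x y) (S : Finset ι) :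
    (#{x ∈ P | l0Support x ⊆ S} : ℝ) ≤ ((2 * R + d) / d) ^ #S := by
  classical
  set V := Submodule.span ℝ (S.image (PiLp.basisFun 2 ℝ ι) : Set (EuclideanSpace ℝ ι))
  set Q := {x ∈ P | l0Support x ⊆ S}
  have hQV : #(Q.subtype (· ∈ V)) = #Q := by
    rw [card_subtype, filter_true_of_mem]
    exact fun x hx => mem_span_basisFun_image_iff.2 (mem_filter.1 hx).2
  have hκ : 1 ≤ (2 * R + d) / d := by rw [le_div_iff₀ hd]; linarith
  have hpack := card_le_of_separated_of_norm_le (E := V) hR hd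
    (P := Q.subtype (· ∈ V)) (fun x hx => hP x (mem_filter.1 (mem_subtype.1 hx)).1)
    (fun x hx y hy hxy => hsep x (mem_filter.1 (mem_subtype.1 hx)).1 y
      (mem_filter.1 (mem_subtype.1 hy)).1 (Subtype.coe_injective.ne hxy))
  rw [hQV] at hpack
  exact hpack.trans (pow_le_pow_right₀ hκ ((finrank_span_finset_le_card _).trans card_image_le))

lemma sum_pow_card_l0Support_le (hR : 0 ≤ R) (hd : 0 < d) (hP : ∀ x ∈ P, ‖x‖ ≤ R)
    (hsep : ∀ x ∈ P, ∀ y ∈ P, x ≠ y → d ≤ dist x y) {ρ : ℝ} (hρ : 0 ≤ ρ) :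
    ∑ x ∈ P, ρ ^ #(l0Support x) ≤ ((2 * R + d) / d * ρ + 1) ^ Fintype.card ι := calc
  ∑ x ∈ P, ρ ^ #(l0Support x)
      = ∑ S ∈ univ.powerset, ∑ x ∈ P with l0Support x = S, ρ ^ #(l0Support x) :=
    (sum_fiberwise_of_maps_to (fun _ _ => mem_powerset.2 (subset_univ _)) _).symm
  _ = ∑ S ∈ univ.powerset, (#{x ∈ P | l0Support x = S} : ℝ) * ρ ^ #S := by
    refine sum_congr rfl fun S _ => ?_
    rw [sum_congr rfl fun x hx => by rw [(mem_filter.1 hx).2], sum_const, nsmul_eq_mul]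
  _ ≤ ∑ S ∈ univ.powerset, ((2 * R + d) / d) ^ #S * ρ ^ #S := by
    refine sum_le_sum fun S _ => mul_le_mul_of_nonneg_right ?_ (pow_nonneg hρ _)
    refine le_trans ?_ (card_filter_l0Support_subset_le hR hd hP hsep S)
    exact_mod_cast card_le_card (monotone_filter_right _ fun _ _ h => subset_of_eq h)
  _ = ((2 * R + d) / d * ρ + 1) ^ Fintype.card ι := by
    simpa [← mul_pow] using sum_pow_mul_eq_add_pow ((2 * R + d) / d * ρ) 1 univ

lemma card_mul_log_card_sub_le (hR : 0 ≤ R) (hd : 0 < d) (hP : ∀ x ∈ P, ‖x‖ ≤ R)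
    (hsep : ∀ x ∈ P, ∀ y ∈ P, x ≠ y → d ≤ dist x y) (a : ℝ) :
    #P * (log #P - (2 * R + d) / d * exp (-a) * Fintype.card ι) ≤
      a * ∑ x ∈ P, (#(l0Support x) : ℝ) := by
  rcases P.eq_empty_or_nonempty with rfl | hne
  · simp
  set κ := (2 * R + d) / d
  have hN : (0 : ℝ) < #P := by exact_mod_cast hne.card_pos
  have hmoment : #P * exp (-(a * ∑ x ∈ P, (#(l0Support x) : ℝ)) / #P) ≤
      exp (κ * exp (-a) * Fintype.card ι) := calc
    _ ≤ ∑ x ∈ P, exp (-a * #(l0Support x)) := by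
      simpa [mul_sum] using card_mul_exp_mean_le_sum_exp P fun x => -a * #(l0Support x)
    _ = ∑ x ∈ P, exp (-a) ^ #(l0Support x) := by simp_rw [mul_comm (-a), exp_nat_mul]
    _ ≤ (κ * exp (-a) + 1) ^ Fintype.card ι :=
      sum_pow_card_l0Support_le hR hd hP hsep (exp_pos _).le
    _ ≤ exp (κ * exp (-a)) ^ Fintype.card ι := by
      gcongr
      exact add_one_le_exp _
    _ = exp (κ * exp (-a) * Fintype.card ι) := by
      rw [mul_comm _ (Fintype.card ι : ℝ), exp_nat_mul]
  have hlog := log_le_log (by positivity) hmoment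
  rw [log_mul hN.ne' (exp_pos _).ne', log_exp, log_exp, neg_div, ← sub_eq_add_neg,
    sub_le_comm, le_div_iff₀ hN] at hlog
  linarith

end Support

theorem real_valued_l0_lower_bound_general (T τ μ ε d : ℝ)
    (hT : 1 ≤ T) (hτ : 0 < τ) (hμ : 0 < μ) (hε2 : ε < 1 / 2)
    (qε : ℝ) (hq : gaussQ qε = ε) (hd : d = 2 * qε / μ) :
    ∃ C : ℝ, 0 < C ∧ ∃ N₀ : ℕ, ∀ N : ℕ, N₀ ≤ N →
      ∀ P : Finset (EuclideanSpace ℝ (Fin ⌈T * Real.logb 2 N⌉₊)),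
        P.card = N →
        (∀ x ∈ P, ‖x‖ ≤ τ) →
        (∀ x ∈ P, ∀ y ∈ P, x ≠ y → d ≤ dist x y) →
        C * N * Real.logb 2 N ≤
          ∑ x ∈ P, ((Finset.univ.filter (fun i => x i ≠ 0)).card : ℝ) := by
  have hd0 : 0 < d := hd ▸ div_pos (mul_pos two_pos (pos_of_gaussQ_lt_half (hq ▸ hε2))) hμ
  set κ := (2 * τ + d) / d
  have hκ : 1 ≤ κ := by rw [le_div_iff₀ hd0]; linarith
  set a := log (8 * κ * T)
  have ha : 0 < a := log_pos (by nlinarith)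
  have hκa : κ * exp (-a) = 1 / (8 * T) := by
    rw [exp_neg, exp_log (by positivity)]
    field_simp
  refine ⟨1 / (4 * a), by positivity, 2, fun N hN P hcard hPτ hsep => ?_⟩
  have hL : 1 ≤ logb 2 N := (le_logb_iff_rpow_le one_lt_two (by positivity)).2 (by simpa using hN)
  have hlogN : logb 2 N / 2 ≤ log N := by
    have : log N = logb 2 N * log 2 := (div_mul_cancel₀ _ (log_pos one_lt_two).ne').symm
    nlinarith [log_two_gt_d9]
  have hM : (⌈T * logb 2 N⌉₊ : ℝ) ≤ 2 * T * logb 2 N :=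
    (Nat.ceil_lt_add_one (by positivity)).le.trans (by nlinarith)
  have key := card_mul_log_card_sub_le hτ.le hd0 hPτ hsep a
  rw [Fintype.card_fin, hcard, hκa] at key
  have hgap : logb 2 N / 4 ≤ log N - 1 / (8 * T) * ⌈T * logb 2 N⌉₊ := by
    have : 1 / (8 * T) * ⌈T * logb 2 N⌉₊ ≤ logb 2 N / 4 := by
      rw [one_div_mul_eq_div, div_le_iff₀ (by positivity)]
      linarith
    linarith
  calc 1 / (4 * a) * N * logb 2 N = N * (logb 2 N / 4) / a := by field_simp
    _ ≤ N * (log N - 1 / (8 * T) * ⌈T * logb 2 N⌉₊) / a := by gcongr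
    _ ≤ ∑ x ∈ P, (#(l0Support x) : ℝ) := by rw [div_le_iff₀ ha]; linarith

theorem real_valued_l0_lower_bound (T τ μ ε d : ℝ)
    (hT : 1 ≤ T) (hτ : 0 < τ) (hμ : 0 < μ) (hε : 0 < ε) (hε2 : ε < 1 / 2)
    (qε : ℝ) (hq : gaussQ qε = ε) (hd : d = 2 * qε / μ) (hdτ : d ≤ 2 * τ) :
    ∃ C : ℝ, 0 < C ∧ ∃ N₀ : ℕ, ∀ N : ℕ, N₀ ≤ N →
      ∀ P : Finset (EuclideanSpace ℝ (Fin ⌈T * Real.logb 2 N⌉₊)),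
        P.card = N →
        (∀ x ∈ P, ‖x‖ ≤ τ) →
        (∀ x ∈ P, ∀ y ∈ P, x ≠ y → d ≤ dist x y) →
        C * N * Real.logb 2 N ≤
          ∑ x ∈ P, ((Finset.univ.filter (fun i => x i ≠ 0)).card : ℝ) :=
  real_valued_l0_lower_bound_general T τ μ ε d hT hτ hμ hε2 qε hq hd
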